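/- arXiv:1809.08736 — 3 statements merged into one kernel-verified Lean document; each statement's English description precedes it below -/
import Mathlib

section
/- Let u, v : ℝ × ℝ → ℝ be smooth (C^∞) functions of (t, x) and let a, b, c, ε, κ, λ, σ be real constants. If (u, v) solves the BBM-KdV system, then the vector with components C^t = 2·(v + σ·v_xx) and C^x = (a + b)·v² + (b·u + 2c)·u + 2λ·u_xx satisfies the conservation law ∂_t C^t + ∂_x C^x = 0 at every point (t, x). -/
open Real

noncomputable def pt (f : ℝ × ℝ → ℝ) : ℝ × ℝ → ℝ :=
  fun p => deriv (fun s => f (s, p.2)) p.1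

noncomputable def px (f : ℝ × ℝ → ℝ) : ℝ × ℝ → ℝ :=
  fun p => deriv (fun s => f (p.1, s)) p.2

section aux

variable {f : ℝ × ℝ → ℝ}

lemma hasDerivAt_pt (hf : ContDiff ℝ (⊤ : ℕ∞) f) (p : ℝ × ℝ) :
    HasDerivAt (fun s => f (s, p.2)) (pt f p) p.1 := by
  have : Differentiable ℝ (fun s => f (s, p.2)) :=
    (hf.comp (contDiff_id.prodMk contDiff_const)).differentiable (by simp)
  exact (this p.1).hasDerivAt

lemma hasDerivAt_px (hf : ContDiff ℝ (⊤ : ℕ∞) f) (p : ℝ × ℝ) :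
    HasDerivAt (fun s => f (p.1, s)) (px f p) p.2 := by
  have : Differentiable ℝ (fun s => f (p.1, s)) :=
    (hf.comp (contDiff_const.prodMk contDiff_id)).differentiable (by simp)
  exact (this p.2).hasDerivAt

lemma pt_eq_fderiv (hf : ContDiff ℝ (⊤ : ℕ∞) f) (p : ℝ × ℝ) :
    pt f p = fderiv ℝ f p (1, 0) := by
  have h : HasDerivAt (fun s : ℝ => (s, p.2)) ((1 : ℝ), (0 : ℝ)) p.1 :=
    (hasDerivAt_id p.1).prodMk (hasDerivAt_const _ _)
  have hd : HasFDerivAt f (fderiv ℝ f p) p :=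
    (hf.differentiable (by simp) p).hasFDerivAt
  have := (hd.comp_hasDerivAt p.1 (by simpa using h))
  exact ((hasDerivAt_pt hf p).unique this)

lemma px_eq_fderiv (hf : ContDiff ℝ (⊤ : ℕ∞) f) (p : ℝ × ℝ) :
    px f p = fderiv ℝ f p (0, 1) := by
  have h : HasDerivAt (fun s : ℝ => (p.1, s)) ((0 : ℝ), (1 : ℝ)) p.2 :=
    (hasDerivAt_const _ _).prodMk (hasDerivAt_id p.2)
  have hd : HasFDerivAt f (fderiv ℝ f p) p :=
    (hf.differentiable (by simp) p).hasFDerivAt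
  have := (hd.comp_hasDerivAt p.2 (by simpa using h))
  exact ((hasDerivAt_px hf p).unique this)

lemma contDiff_apply_fderiv (w : ℝ × ℝ) (hf : ContDiff ℝ (⊤ : ℕ∞) f) :
    ContDiff ℝ (⊤ : ℕ∞) (fun p => fderiv ℝ f p w) := by
  have h1 : ContDiff ℝ (⊤ : ℕ∞) (fderiv ℝ f) := hf.fderiv_right (by simp)
  exact (ContinuousLinearMap.apply ℝ ℝ w).contDiff.comp h1

lemma contDiff_pt (hf : ContDiff ℝ (⊤ : ℕ∞) f) : ContDiff ℝ (⊤ : ℕ∞) (pt f) := by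
  have : pt f = fun p => fderiv ℝ f p (1, 0) := funext (pt_eq_fderiv hf)
  rw [this]; exact contDiff_apply_fderiv _ hf

lemma contDiff_px (hf : ContDiff ℝ (⊤ : ℕ∞) f) : ContDiff ℝ (⊤ : ℕ∞) (px f) := by
  have : px f = fun p => fderiv ℝ f p (0, 1) := funext (px_eq_fderiv hf)
  rw [this]; exact contDiff_apply_fderiv _ hf

lemma pt_px_comm (hf : ContDiff ℝ (⊤ : ℕ∞) f) : pt (px f) = px (pt f) := by
  funext p
  have hpx : ContDiff ℝ (⊤ : ℕ∞) (px f) := contDiff_px hf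
  have hpt : ContDiff ℝ (⊤ : ℕ∞) (pt f) := contDiff_pt hf
  have h1 : ContDiff ℝ (⊤ : ℕ∞) (fderiv ℝ f) := hf.fderiv_right (by simp)
  have h2 : HasFDerivAt (fderiv ℝ f) (fderiv ℝ (fderiv ℝ f) p) p :=
    (h1.differentiable (by simp) p).hasFDerivAt
  have hsymm := second_derivative_symmetric
    (fun y => (hf.differentiable (by simp) y).hasFDerivAt) h2 (1, 0) (0, 1)
  -- fderiv of p ↦ fderiv f p w is fderiv² applied
  have key : ∀ w : ℝ × ℝ, ∀ z : ℝ × ℝ,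
      fderiv ℝ (fun q => fderiv ℝ f q w) p z = fderiv ℝ (fderiv ℝ f) p z w := by
    intro w z
    have : HasFDerivAt (fun q => fderiv ℝ f q w)
        ((ContinuousLinearMap.apply ℝ ℝ w).comp (fderiv ℝ (fderiv ℝ f) p)) p :=
      (ContinuousLinearMap.apply ℝ ℝ w).hasFDerivAt.comp p h2
    rw [this.fderiv]; rfl
  have e1 : pt (px f) p = fderiv ℝ (px f) p (1, 0) := pt_eq_fderiv hpx p
  have e2 : px (pt f) p = fderiv ℝ (pt f) p (0, 1) := px_eq_fderiv hpt p
  have e3 : px f = fun q => fderiv ℝ f q (0, 1) := funext (px_eq_fderiv hf)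
  have e4 : pt f = fun q => fderiv ℝ f q (1, 0) := funext (pt_eq_fderiv hf)
  rw [e1, e2, e3, e4, key, key]
  exact hsymm

end aux

/-- The BBM-KdV system: F1 = 0 and F2 = 0 everywhere. -/
def BBMKdV (a b c ε κ lam σ : ℝ) (u v : ℝ × ℝ → ℝ) : Prop :=
  (∀ p : ℝ × ℝ, pt u p + (a + b) * v p * px u p + (a * u p + c) * px v p
      + ε * px (px (pt u)) p + κ * px (px (px v)) p = 0) ∧
  (∀ p : ℝ × ℝ, pt v p + (b * u p + c) * px u p + (a + b) * v p * px v p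
      + lam * px (px (px u)) p + σ * px (px (pt v)) p = 0)

theorem stmt_1 (u v : ℝ × ℝ → ℝ) (hu : ContDiff ℝ (⊤ : ℕ∞) u) (hv : ContDiff ℝ (⊤ : ℕ∞) v)
    (a b c ε κ lam σ : ℝ)
    (hsol : BBMKdV a b c ε κ lam σ u v) :
    ∀ p : ℝ × ℝ,
      pt (fun q => 2 * (v q + σ * px (px v) q)) p
      + px (fun q => (a + b) * v q ^ 2 + (b * u q + 2 * c) * u q + 2 * lam * px (px u) q) p = 0 := by
  intro p
  have hvx := contDiff_px hv
  have hvxx := contDiff_px hvx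
  have hux := contDiff_px hu
  have huxx := contDiff_px hux
  -- compute pt of C^t
  have h1 : pt (fun q => 2 * (v q + σ * px (px v) q)) p
      = 2 * (pt v p + σ * pt (px (px v)) p) := by
    have := (((hasDerivAt_pt hv p).add ((hasDerivAt_pt hvxx p).const_mul σ)).const_mul 2)
    exact this.deriv
  -- compute px of C^x
  have h2 : px (fun q => (a + b) * v q ^ 2 + (b * u q + 2 * c) * u q + 2 * lam * px (px u) q) p
      = (a + b) * (2 * v p * px v p)
        + ((b * px u p) * u p + (b * u p + 2 * c) * px u p)
        + 2 * lam * px (px (px u)) p := by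
    have hv1 := hasDerivAt_px hv p
    have hu1 := hasDerivAt_px hu p
    have huxx1 := hasDerivAt_px huxx p
    have h := ((((hv1.pow 2).const_mul (a + b)).add
        (((hu1.const_mul b).add_const (2 * c)).mul hu1)).add (huxx1.const_mul (2 * lam)))
    have hd := h.deriv
    erw [show px (fun q => (a + b) * v q ^ 2 + (b * u q + 2 * c) * u q + 2 * lam * px (px u) q) p
      = deriv (fun s => (a + b) * v (p.1, s) ^ 2 + (b * u (p.1, s) + 2 * c) * u (p.1, s)
        + 2 * lam * px (px u) (p.1, s)) p.2 from rfl, hd]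
    ring
  -- commute derivatives
  have hcomm : pt (px (px v)) p = px (px (pt v)) p := by
    have c1 : pt (px (px v)) = px (pt (px v)) := pt_px_comm hvx
    have c2 : pt (px v) = px (pt v) := pt_px_comm hv
    rw [c1, c2]
  have hF2 := hsol.2 p
  rw [h1, h2, hcomm]
  nlinarith [hF2]
end

section
/- Let u, v : ℝ × ℝ → ℝ be smooth (C^∞) functions of (t, x) and let a, b, c, ε, κ, λ, σ be real constants with a = 0, b ≠ 0, c ≠ 0. Let c1, c2, c3 be real constants such that: if ε and κ are not both zero then c1 = 0; and if κ ≠ −λ then c2 = 0. Define ū(t,x) = c1·exp(b·u(t,x)/c) − c2·(b·u(t,x) + 2c) and v̄(t,x) = c2·b·v(t,x) + c3. If (u, v) solves the BBM-KdV system, then (ū, v̄) solves the adjoint system at every point (t, x). -/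
open Real

/-- The adjoint of the BBM-KdV system along (u, v): F1* = 0 and F2* = 0 everywhere. -/
def AdjBBMKdV (a b c ε κ lam σ : ℝ) (u v ub vb : ℝ × ℝ → ℝ) : Prop :=
  (∀ p : ℝ × ℝ, pt ub p + (a + b) * v p * px ub p + (b * u p + c) * px vb p
      + b * ub p * px v p + ε * px (px (pt ub)) p + lam * px (px (px vb)) p = 0) ∧
  (∀ p : ℝ × ℝ, pt vb p + (a * u p + c) * px ub p + (a + b) * v p * px vb p
      - b * ub p * px u p + κ * px (px (px ub)) p + σ * px (px (pt vb)) p = 0)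

lemma px_lin (A B : ℝ) (f : ℝ × ℝ → ℝ) : px (fun p => A * f p + B) = fun p => A * px f p := by
  funext p
  simp only [px]
  rw [deriv_add_const, deriv_const_mul_field]

lemma pt_lin (A B : ℝ) (f : ℝ × ℝ → ℝ) : pt (fun p => A * f p + B) = fun p => A * pt f p := by
  funext p
  simp only [pt]
  rw [deriv_add_const, deriv_const_mul_field]

lemma px_cm (A : ℝ) (f : ℝ × ℝ → ℝ) : px (fun p => A * f p) = fun p => A * px f p := by
  funext p
  simp only [px]
  rw [deriv_const_mul_field]

lemma deriv_ubar (g : ℝ → ℝ) (b c c1 c2 d s : ℝ) (hg : HasDerivAt g d s) :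
    deriv (fun t => c1 * Real.exp (b * g t / c) - c2 * (b * g t + 2 * c)) s
      = c1 * Real.exp (b * g s / c) * (b * d / c) - c2 * (b * d) := by
  have h1 : HasDerivAt (fun t => b * g t / c) (b * d / c) s := (hg.const_mul b).div_const c
  have h3 := (h1.exp.const_mul c1).sub (((hg.const_mul b).add_const (2*c)).const_mul c2)
  exact h3.deriv.trans (by ring)

theorem stmt_9 (u v : ℝ × ℝ → ℝ) (hu : ContDiff ℝ (⊤ : ℕ∞) u) (hv : ContDiff ℝ (⊤ : ℕ∞) v)
    (a b c ε κ lam σ : ℝ)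
    (ha : a = 0) (hb : b ≠ 0) (hc : c ≠ 0)
    (c1 c2 c3 : ℝ)
    (h1 : ¬(ε = 0 ∧ κ = 0) → c1 = 0)
    (h2 : κ ≠ -lam → c2 = 0)
    (hsol : BBMKdV a b c ε κ lam σ u v) :
    AdjBBMKdV a b c ε κ lam σ u v
      (fun p => c1 * Real.exp (b * u p / c) - c2 * (b * u p + 2 * c))
      (fun p => c2 * b * v p + c3) := by
  subst ha
  obtain ⟨hF1, hF2⟩ := hsol
  have hu' : Differentiable ℝ u := hu.differentiable (by simp)
  have hsliceT : ∀ x : ℝ, Differentiable ℝ (fun s => u (s, x)) := by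
    intro x; exact hu'.comp (differentiable_id.prodMk (differentiable_const x))
  have hsliceX : ∀ t : ℝ, Differentiable ℝ (fun s => u (t, s)) := by
    intro t; exact hu'.comp ((differentiable_const t).prodMk differentiable_id)
  -- derivative facts for ub
  have hptu : ∀ p : ℝ × ℝ,
      pt (fun p => c1 * Real.exp (b * u p / c) - c2 * (b * u p + 2 * c)) p
      = c1 * Real.exp (b * u p / c) * (b * pt u p / c) - c2 * (b * pt u p) := by
    intro p
    have hg : HasDerivAt (fun s => u (s, p.2)) (pt u p) p.1 := ((hsliceT p.2) p.1).hasDerivAt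
    have := deriv_ubar (fun s => u (s, p.2)) b c c1 c2 (pt u p) p.1 hg
    simpa [pt] using this
  have hpxu : ∀ p : ℝ × ℝ,
      px (fun p => c1 * Real.exp (b * u p / c) - c2 * (b * u p + 2 * c)) p
      = c1 * Real.exp (b * u p / c) * (b * px u p / c) - c2 * (b * px u p) := by
    intro p
    have hg : HasDerivAt (fun s => u (p.1, s)) (px u p) p.2 := ((hsliceX p.1) p.2).hasDerivAt
    have := deriv_ubar (fun s => u (p.1, s)) b c c1 c2 (px u p) p.2 hg
    simpa [px] using this
  -- derivative facts for vb
  have hvbt : pt (fun p => c2 * b * v p + c3) = fun p => c2 * b * pt v p := pt_lin _ _ _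
  have hvbx : px (fun p => c2 * b * v p + c3) = fun p => c2 * b * px v p := px_lin _ _ _
  -- case facts
  have hC1 : c1 = 0 ∨ (ε = 0 ∧ κ = 0) := by
    by_cases h : ε = 0 ∧ κ = 0
    · exact Or.inr h
    · exact Or.inl (h1 h)
  have hC2 : c2 = 0 ∨ κ = -lam := by
    by_cases h : κ = -lam
    · exact Or.inr h
    · exact Or.inl (h2 h)
  refine ⟨fun p => ?_, fun p => ?_⟩
  · -- F1*
    have heterm : ε * px (px (pt (fun p => c1 * Real.exp (b * u p / c)
          - c2 * (b * u p + 2 * c)))) p = ε * (-(c2*b) * px (px (pt u)) p) := by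
      by_cases he : ε = 0
      · rw [he]; ring
      · have hc1 : c1 = 0 := h1 (by tauto)
        have hlin : (fun p : ℝ × ℝ => c1 * Real.exp (b * u p / c) - c2 * (b * u p + 2 * c))
            = fun q => (-(c2*b)) * u q + (-(c2*(2*c))) := by
          funext q; rw [hc1]; ring
        rw [hlin, pt_lin]
        simp only [px_cm]
    rw [heterm, hptu, hpxu p, hvbx]
    simp only [px_cm]
    beta_reduce
    have h := hF1 p
    rcases hC1 with hc1 | ⟨he, hk⟩
    · subst hc1
      rcases hC2 with hc2 | hkl
      · subst hc2
        ring
      · linear_combination (norm := (field_simp; ring)) (-(c2 * b)) * h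
          + (c2 * b * px (px (px v)) p) * hkl
    · subst he; subst hk
      rcases hC2 with hc2 | hkl
      · subst hc2
        linear_combination (norm := (field_simp; ring))
          (c1 * Real.exp (b * u p / c) * b / c) * h
      · have hl : lam = 0 := by linarith [hkl]
        subst hl
        linear_combination (norm := (field_simp; ring))
          (c1 * Real.exp (b * u p / c) * b / c - c2 * b) * h
  · -- F2*
    have hkterm : κ * px (px (px (fun p => c1 * Real.exp (b * u p / c)
          - c2 * (b * u p + 2 * c)))) p = κ * (-(c2*b) * px (px (px u)) p) := by
      by_cases hk : κ = 0
      · rw [hk]; ring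
      · have hc1 : c1 = 0 := h1 (by tauto)
        have hlin : (fun p : ℝ × ℝ => c1 * Real.exp (b * u p / c) - c2 * (b * u p + 2 * c))
            = fun q => (-(c2*b)) * u q + (-(c2*(2*c))) := by
          funext q; rw [hc1]; ring
        rw [hlin, px_lin]
        simp only [px_cm]
    rw [hkterm, hvbt, hpxu p, hvbx]
    simp only [px_cm]
    beta_reduce
    have h := hF2 p
    rcases hC2 with hc2 | hkl
    · subst hc2
      field_simp
      ring
    · linear_combination (norm := (field_simp; ring)) (c2 * b) * h
        - (c2 * b * px (px (px u)) p) * hkl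
end

section
/- Let u, v : ℝ × ℝ → ℝ be smooth (C^∞) functions of (t, x) and let a, b, c, ε, κ, λ, σ be real constants with a = b, κ = 0, λ = 0 and a ≠ 0. If (u, v) solves the BBM-KdV system, then for every real number s the scaled pair ũ(t,x) = (exp(−2·a·s)·(a·u(exp(−2·a·s)·t, x) + c) − c)/a, ṽ(t,x) = exp(−2·a·s)·v(exp(−2·a·s)·t, x) also solves the BBM-KdV system. (This is the invariance under the one-parameter group generated by the symmetry X₁ = (a + b)·(t·∂_t − v·∂_v) − 2·(a·u + c)·∂_u in the case a = b.) -/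
open Real

lemma pt_scale (f : ℝ × ℝ → ℝ) (hf : Differentiable ℝ f) (E : ℝ) (p : ℝ × ℝ) :
    pt (fun q => f (E * q.1, q.2)) p = E * pt f (E * p.1, p.2) := by
  have hd : DifferentiableAt ℝ (fun s : ℝ => f (s, p.2)) (E * p.1) :=
    (hf _).comp _ ((differentiable_id.prodMk (differentiable_const _)) _)
  have h1 : HasDerivAt (fun s : ℝ => f (s, p.2)) (pt f (E * p.1, p.2)) (E * p.1) :=
    hd.hasDerivAt
  have h2 : HasDerivAt (fun s : ℝ => f (E * s, p.2)) (pt f (E * p.1, p.2) * E) p.1 := by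
    have := HasDerivAt.comp p.1 h1 ((hasDerivAt_id p.1).const_mul E)
    simpa [Function.comp_def] using this
  have h3 : pt (fun q => f (E * q.1, q.2)) p = pt f (E * p.1, p.2) * E := h2.deriv
  rw [h3, mul_comm]

lemma pt_scale_mul (f : ℝ × ℝ → ℝ) (hf : Differentiable ℝ f) (C E : ℝ) (p : ℝ × ℝ) :
    pt (fun q => C * f (E * q.1, q.2)) p = C * E * pt f (E * p.1, p.2) := by
  have h := pt_scale (fun q => C * f q) (by exact (differentiable_const C).mul hf) E p
  have h2 : pt (fun q : ℝ × ℝ => C * f q) (E * p.1, p.2) = C * pt f (E * p.1, p.2) := by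
    simp only [pt]; rw [deriv_const_mul_field]
  simp only [pt] at h h2 ⊢
  rw [h, h2]; ring

lemma px_scale_mul (f : ℝ × ℝ → ℝ) (C E : ℝ) (p : ℝ × ℝ) :
    px (fun q => C * f (E * q.1, q.2)) p = C * px f (E * p.1, p.2) := by
  simp only [px]
  rw [deriv_const_mul_field]

lemma pt_aff (g : ℝ × ℝ → ℝ) (k : ℝ) (p : ℝ × ℝ) :
    pt (fun q => g q + k) p = pt g p := by
  simp only [pt]; rw [deriv_add_const]

lemma px_aff (g : ℝ × ℝ → ℝ) (k : ℝ) (p : ℝ × ℝ) :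
    px (fun q => g q + k) p = px g p := by
  simp only [px]; rw [deriv_add_const]

theorem stmt_16 (u v : ℝ × ℝ → ℝ) (hu : ContDiff ℝ (⊤ : ℕ∞) u) (hv : ContDiff ℝ (⊤ : ℕ∞) v)
    (a b c ε κ lam σ : ℝ)
    (hab : a = b) (hk : κ = 0) (hl : lam = 0) (ha : a ≠ 0)
    (hsol : BBMKdV a b c ε κ lam σ u v) :
    ∀ s : ℝ, BBMKdV a b c ε κ lam σ
      (fun p => (Real.exp (-2 * a * s) * (a * u (Real.exp (-2 * a * s) * p.1, p.2) + c) - c) / a)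
      (fun p => Real.exp (-2 * a * s) * v (Real.exp (-2 * a * s) * p.1, p.2)) := by
  intro s
  set E : ℝ := Real.exp (-2 * a * s) with hE
  have hud : Differentiable ℝ u := hu.differentiable (by simp)
  have hvd : Differentiable ℝ v := hv.differentiable (by simp)
  have hUeq : (fun p : ℝ × ℝ => (E * (a * u (E * p.1, p.2) + c) - c) / a)
      = fun q : ℝ × ℝ => E * u (E * q.1, q.2) + (E * c - c) / a := by
    funext q; field_simp; ring
  have hptU : pt (fun p : ℝ × ℝ => (E * (a * u (E * p.1, p.2) + c) - c) / a)
      = fun q => E * E * pt u (E * q.1, q.2) := by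
    funext q
    rw [hUeq]
    rw [pt_aff, pt_scale_mul u hud E E q]
  have hpxU : px (fun p : ℝ × ℝ => (E * (a * u (E * p.1, p.2) + c) - c) / a)
      = fun q => E * px u (E * q.1, q.2) := by
    funext q
    rw [hUeq, px_aff, px_scale_mul u E E q]
  have hptV : pt (fun p : ℝ × ℝ => E * v (E * p.1, p.2))
      = fun q => E * E * pt v (E * q.1, q.2) := by
    funext q; rw [pt_scale_mul v hvd E E q]
  have hpxV : px (fun p : ℝ × ℝ => E * v (E * p.1, p.2))
      = fun q => E * px v (E * q.1, q.2) := by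
    funext q; rw [px_scale_mul v E E q]
  have heps : px (px (fun q : ℝ × ℝ => E * E * pt u (E * q.1, q.2)))
      = fun q => E * E * px (px (pt u)) (E * q.1, q.2) := by
    have h1 : px (fun q : ℝ × ℝ => E * E * pt u (E * q.1, q.2))
        = fun q => E * E * px (pt u) (E * q.1, q.2) := by
      funext q; rw [px_scale_mul (pt u) (E * E) E q]
    rw [h1]
    funext q; rw [px_scale_mul (px (pt u)) (E * E) E q]
  have hsig : px (px (fun q : ℝ × ℝ => E * E * pt v (E * q.1, q.2)))
      = fun q => E * E * px (px (pt v)) (E * q.1, q.2) := by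
    have h1 : px (fun q : ℝ × ℝ => E * E * pt v (E * q.1, q.2))
        = fun q => E * E * px (pt v) (E * q.1, q.2) := by
      funext q; rw [px_scale_mul (pt v) (E * E) E q]
    rw [h1]
    funext q; rw [px_scale_mul (px (pt v)) (E * E) E q]
  obtain ⟨h1, h2⟩ := hsol
  subst hab hk hl
  constructor
  · intro p
    have hF := h1 (E * p.1, p.2)
    rw [hptU, hpxU, hpxV, heps]
    simp only [zero_mul, add_zero] at hF ⊢
    have hq : a * ((E * (a * u (E * p.1, p.2) + c) - c) / a) + c
        = E * (a * u (E * p.1, p.2) + c) := by field_simp; ring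
    rw [hq]
    linear_combination (E * E) * hF
  · intro p
    have hF := h2 (E * p.1, p.2)
    rw [hptV, hpxU, hpxV, hsig]
    simp only [zero_mul, add_zero, zero_add] at hF ⊢
    have hq : a * ((E * (a * u (E * p.1, p.2) + c) - c) / a) + c
        = E * (a * u (E * p.1, p.2) + c) := by field_simp; ring
    rw [hq]
    linear_combination (E * E) * hF
end
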